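/- Let (X, V∖X) be a minimum cut of G and let u, v be distinct vertices of V_H. Then at least one of the following holds: (i) one part of the cut contains all vertices of (⋃_{S ∈ C(u,v)} S) ∪ {u,v}; or (ii) the value of the cut equals min_{S ∈ C(u,v)} c''(S); or (iii) u and v lie in different parts of the cut, and the number of cut edges having at least one endpoint in ⋃_{S ∈ C(u,v)} S equals ∑_{S ∈ C(u,v)} c'(S). -/

import Mathlib

open SimpleGraph Set

set_option linter.unusedSectionVars false
set_option linter.unusedVariables false

namespace EnergyDiameter

noncomputable section

variable {V : Type*}

/-- The subgraph of `G` induced by the vertex set `A`, viewed as a graph on the same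
vertex type (vertices outside `A` become isolated). -/
def restrictG (G : SimpleGraph V) (A : Set V) : SimpleGraph V where
  Adj x y := G.Adj x y ∧ x ∈ A ∧ y ∈ A
  symm := ⟨by rintro x y ⟨h, hx, hy⟩; exact ⟨h.symm, hy, hx⟩⟩
  loopless := ⟨fun x h => G.irrefl h.1⟩

/-- `G[S]`: the subgraph of `G` induced by all edges of `G` having at least one endpoint
in `S`, viewed as a graph on the same vertex type. -/
def edgeNbhdG (G : SimpleGraph V) (S : Set V) : SimpleGraph V where
  Adj x y := G.Adj x y ∧ (x ∈ S ∨ y ∈ S)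
  symm := ⟨by rintro x y ⟨h, hxy⟩; exact ⟨h.symm, hxy.symm⟩⟩
  loopless := ⟨fun x h => G.irrefl h.1⟩

/-- The vertex set of `G[S]`: `S` together with all `G`-neighbors of vertices of `S`. -/
def vertsOf (G : SimpleGraph V) (S : Set V) : Set V :=
  S ∪ {x | ∃ w ∈ S, G.Adj x w}

/-- One direction of the edges of `H` together with a new internally disjoint path
of length `l` between `u` and `v` (with internal vertices `Fin (l-1)`). -/
def addPathRel (H : SimpleGraph V) (u v : V) (l : ℕ) :
    V ⊕ Fin (l - 1) → V ⊕ Fin (l - 1) → Prop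
  | Sum.inl a, Sum.inl b => H.Adj a b ∨ (l = 1 ∧ a = u ∧ b = v)
  | Sum.inl a, Sum.inr i => (a = u ∧ (i : ℕ) = 0) ∨ (a = v ∧ (i : ℕ) + 2 = l)
  | Sum.inr i, Sum.inr j => (i : ℕ) + 1 = (j : ℕ)
  | _, _ => False

/-- `G^l[S]`-style construction: `H` with a new internally disjoint path of length `l`
added between `u` and `v`. -/
def addPathG (H : SimpleGraph V) (u v : V) (l : ℕ) : SimpleGraph (V ⊕ Fin (l - 1)) :=
  SimpleGraph.fromRel (addPathRel H u v l)

/-- `max_{s,t ∈ A} dist_H(s,t)`. -/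
def maxDistOn {W : Type*} (H : SimpleGraph W) (A : Set W) : ℕ :=
  sSup {d : ℕ | ∃ s ∈ A, ∃ t ∈ A, d = H.dist s t}

variable [Fintype V]

/-- `√n` where `n` is the number of vertices. -/
def sqrtn (V : Type*) [Fintype V] : ℝ := Real.sqrt (Fintype.card V)

/-- The high-degree vertices: degree at least `√n`. -/
def VH (G : SimpleGraph V) : Set V := {v | sqrtn V ≤ ((G.neighborSet v).ncard : ℝ)}

/-- The low-degree vertices. -/
def VL (G : SimpleGraph V) : Set V := (VH G)ᶜ

/-- `S` is a connected component of the subgraph of `G` induced by `V_L`. -/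
def IsLowComp (G : SimpleGraph V) (S : Set V) : Prop :=
  S ⊆ VL G ∧ ∃ x ∈ S, ∀ y : V, ((restrictG G (VL G)).Reachable x y ↔ y ∈ S)

/-- The set of high-degree vertices having a `G`-neighbor in `S`. -/
def HNbrs (G : SimpleGraph V) (S : Set V) : Set V :=
  {x | x ∈ VH G ∧ ∃ w ∈ S, G.Adj x w}

/-- `|S| ≤ √n`. -/
def SmallComp (S : Set V) : Prop := (S.ncard : ℝ) ≤ sqrtn V

def IsType1 (G : SimpleGraph V) (S : Set V) : Prop :=
  IsLowComp G S ∧ SmallComp S ∧ ∃ u : V, HNbrs G S = {u}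

def IsType2 (G : SimpleGraph V) (S : Set V) : Prop :=
  IsLowComp G S ∧ SmallComp S ∧ ∃ u v : V, u ≠ v ∧ HNbrs G S = {u, v}

def IsType3 (G : SimpleGraph V) (S : Set V) : Prop :=
  IsLowComp G S ∧ ¬ IsType1 G S ∧ ¬ IsType2 G S

/-- `C(u)`: type-1 components attached to `u`. -/
def C1 (G : SimpleGraph V) (u : V) : Set (Set V) :=
  {S | IsLowComp G S ∧ SmallComp S ∧ HNbrs G S = {u}}

/-- `C(u,v)`: type-2 components attached to `{u,v}`. -/
def C2 (G : SimpleGraph V) (u v : V) : Set (Set V) :=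
  {S | IsLowComp G S ∧ SmallComp S ∧ HNbrs G S = {u, v}}

/-- `max_{w ∈ S} dist_G(u,w)`. -/
def eccOn (G : SimpleGraph V) (u : V) (S : Set V) : ℕ := sSup (G.dist u '' S)

/-- `S^{u,k}`: vertices of `S` whose `G[S]`-distance to `v` exceeds that to `u`
by at least `k`. -/
def Suk (G : SimpleGraph V) (S : Set V) (u v : V) (k : ℤ) : Set V :=
  {w | w ∈ S ∧ k ≤ ((edgeNbhdG G S).dist w v : ℤ) - ((edgeNbhdG G S).dist w u : ℤ)}

/-- `max_{w ∈ S^{u,k}} dist_{G[S]}(u,w)`. -/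
def eccK (G : SimpleGraph V) (S : Set V) (u v : V) (k : ℤ) : ℕ :=
  sSup ((edgeNbhdG G S).dist u '' Suk G S u v k)

/-- `φ^l(S) = max_{s,t ∈ S ∪ {u,v}} dist_{G^l[S]}(s,t)`. -/
def phiG (G : SimpleGraph V) (S : Set V) (u v : V) (l : ℕ) : ℕ :=
  maxDistOn (addPathG (edgeNbhdG G S) u v l) (Sum.inl '' (S ∪ {u, v}))

/-- A choice of the distance parameters of type-1 and type-2 components. -/
structure Params (V : Type*) where
  A1 : V → Set V
  A2 : V → Set V
  B : V → Set V
  R : V → V → Set V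
  A1k : ℤ → V → V → Set V
  A2k : ℤ → V → V → Set V
  Bl : ℕ → V → V → Set V

def kBound (V : Type*) [Fintype V] : ℤ := (Nat.floor (sqrtn V) : ℤ) + 1

def lBound (V : Type*) [Fintype V] : ℕ := Nat.floor (sqrtn V) + 1

/-- The defining properties of the parameters (set-valued parameters default to `∅`
when undefined; ties broken arbitrarily). -/
def ValidParams (G : SimpleGraph V) (P : Params V) : Prop :=
  (∀ u ∈ VH G,
    ((C1 G u).Nonempty → P.A1 u ∈ C1 G u ∧
        ∀ S ∈ C1 G u, eccOn G u S ≤ eccOn G u (P.A1 u)) ∧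
    (¬ (C1 G u).Nonempty → P.A1 u = ∅)) ∧
  (∀ u ∈ VH G,
    ((C1 G u \ {P.A1 u}).Nonempty → P.A2 u ∈ C1 G u \ {P.A1 u} ∧
        ∀ S ∈ C1 G u \ {P.A1 u}, eccOn G u S ≤ eccOn G u (P.A2 u)) ∧
    (¬ (C1 G u \ {P.A1 u}).Nonempty → P.A2 u = ∅)) ∧
  (∀ u ∈ VH G,
    ((C1 G u).Nonempty → P.B u ∈ C1 G u ∧
        ∀ S ∈ C1 G u, maxDistOn G (S ∪ {u}) ≤ maxDistOn G (P.B u ∪ {u})) ∧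
    (¬ (C1 G u).Nonempty → P.B u = ∅)) ∧
  (∀ u ∈ VH G, ∀ v ∈ VH G, u ≠ v →
    ((C2 G u v).Nonempty → P.R u v ∈ C2 G u v ∧
        ∀ S ∈ C2 G u v, (edgeNbhdG G (P.R u v)).dist u v ≤ (edgeNbhdG G S).dist u v) ∧
    (¬ (C2 G u v).Nonempty → P.R u v = ∅)) ∧
  (∀ u ∈ VH G, ∀ v ∈ VH G, u ≠ v → ∀ k : ℤ,
    ((C2 G u v).Nonempty → P.A1k k u v ∈ C2 G u v ∧
        ∀ S ∈ C2 G u v, eccK G S u v k ≤ eccK G (P.A1k k u v) u v k) ∧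
    (¬ (C2 G u v).Nonempty → P.A1k k u v = ∅)) ∧
  (∀ u ∈ VH G, ∀ v ∈ VH G, u ≠ v → ∀ k : ℤ,
    ((C2 G u v \ {P.A1k k u v}).Nonempty → P.A2k k u v ∈ C2 G u v \ {P.A1k k u v} ∧
        ∀ S ∈ C2 G u v \ {P.A1k k u v}, eccK G S u v k ≤ eccK G (P.A2k k u v) u v k) ∧
    (¬ (C2 G u v \ {P.A1k k u v}).Nonempty → P.A2k k u v = ∅)) ∧
  (∀ u ∈ VH G, ∀ v ∈ VH G, u ≠ v → ∀ l : ℕ, 1 ≤ l →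
    ((C2 G u v \ {P.R u v}).Nonempty → P.Bl l u v ∈ C2 G u v \ {P.R u v} ∧
        ∀ S ∈ C2 G u v \ {P.R u v}, phiG G S u v l ≤ phiG G (P.Bl l u v) u v l) ∧
    (¬ (C2 G u v \ {P.R u v}).Nonempty → P.Bl l u v = ∅))

/-- The vertex set of `G*`. -/
def VStarP (G : SimpleGraph V) (P : Params V) : Set V :=
  VH G ∪ {x | ∃ S, IsType3 G S ∧ x ∈ S} ∪
    (⋃ u ∈ VH G, P.A1 u ∪ P.A2 u ∪ P.B u) ∪
    (⋃ u ∈ VH G, ⋃ v ∈ VH G, ⋃ (_ : u ≠ v),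
      (⋃ k ∈ {k : ℤ | |k| ≤ kBound V}, P.A1k k u v ∪ P.A2k k u v) ∪
      (⋃ l ∈ Set.Icc 1 (lBound V), P.Bl l u v) ∪ P.R u v)


/-- The value of a cut `X` of a graph `H`: the number of edges of `H` with exactly one
endpoint in `X` (counted as ordered pairs with first coordinate in `X`). -/
def cutValue {W : Type*} (H : SimpleGraph W) (X : Set W) : ℕ :=
  {p : W × W | H.Adj p.1 p.2 ∧ p.1 ∈ X ∧ p.2 ∉ X}.ncard

/-- `X` is a minimum cut of `H`. -/
def IsMinCut {W : Type*} (H : SimpleGraph W) (X : Set W) : Prop :=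
  X.Nonempty ∧ Xᶜ.Nonempty ∧
    ∀ Y : Set W, Y.Nonempty → Yᶜ.Nonempty → cutValue H X ≤ cutValue H Y

/-- `c'(S)`: the `u`–`v` minimum cut value of `G[S]` (over cuts of `G[S]` separating
`u` from `v`). -/
def stMinCutVal (G : SimpleGraph V) (S : Set V) (u v : V) : ℕ :=
  sInf {c : ℕ | ∃ Y ⊆ vertsOf G S, Y.Nonempty ∧ (vertsOf G S \ Y).Nonempty ∧
    ((u ∈ Y ∧ v ∉ Y) ∨ (v ∈ Y ∧ u ∉ Y)) ∧ c = cutValue (edgeNbhdG G S) Y}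

/-- `c''(S)`: the minimum cut value of `G[S]` over cuts with `u` and `v` in the same
part. -/
def samePartMinCutVal (G : SimpleGraph V) (S : Set V) (u v : V) : ℕ :=
  sInf {c : ℕ | ∃ Y ⊆ vertsOf G S, Y.Nonempty ∧ (vertsOf G S \ Y).Nonempty ∧
    ((u ∈ Y ∧ v ∈ Y) ∨ (u ∉ Y ∧ v ∉ Y)) ∧ c = cutValue (edgeNbhdG G S) Y}

/-! ### Auxiliary lemmas -/

section Aux

variable {G : SimpleGraph V} {u v : V} {S S' X Y : Set V}

/-- Low components are closed under `G`-adjacency within `V_L`. -/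
lemma mem_of_adj_lowComp (hS : IsLowComp G S) {w y : V} (hw : w ∈ S) (hy : y ∈ VL G)
    (hadj : G.Adj w y) : y ∈ S := by
  obtain ⟨hSVL, x, hx, hchar⟩ := hS
  have hxw : (restrictG G (VL G)).Reachable x w := (hchar w).mpr hw
  have hwy : (restrictG G (VL G)).Adj w y := ⟨hadj, hSVL hw, hy⟩
  exact (hchar y).mp (hxw.trans hwy.reachable)

lemma C2_isLowComp (hS : S ∈ C2 G u v) : IsLowComp G S := hS.1

lemma not_mem_C2_of_VH {w : V} (hw : w ∈ VH G) (hS : S ∈ C2 G u v) : w ∉ S :=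
  fun h => (hS.1.1 h) hw

lemma C2_nonempty (hS : S ∈ C2 G u v) : S.Nonempty := ⟨hS.1.2.choose, hS.1.2.choose_spec.1⟩

/-- For a type-2 component, `vertsOf G S = S ∪ {u, v}`. -/
lemma vertsOf_C2 (hS : S ∈ C2 G u v) : vertsOf G S = S ∪ {u, v} := by
  obtain ⟨hlow, _, hnbrs⟩ := hS
  ext x
  constructor
  · rintro (hx | ⟨w, hw, hadj⟩)
    · exact Or.inl hx
    · by_cases hxH : x ∈ VH G
      · have : x ∈ HNbrs G S := ⟨hxH, w, hw, hadj⟩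
        rw [hnbrs] at this
        exact Or.inr this
      · exact Or.inl (mem_of_adj_lowComp hlow hw hxH hadj.symm)
  · rintro (hx | hx)
    · exact Or.inl hx
    · have : x ∈ HNbrs G S := by rw [hnbrs]; exact hx
      exact Or.inr this.2

lemma mem_vertsOf_of_mem (hx : u ∈ S) : u ∈ vertsOf G S := Or.inl hx

lemma u_mem_vertsOf (hS : S ∈ C2 G u v) : u ∈ vertsOf G S := by
  rw [vertsOf_C2 hS]; exact Or.inr (Or.inl rfl)

lemma v_mem_vertsOf (hS : S ∈ C2 G u v) : v ∈ vertsOf G S := by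
  rw [vertsOf_C2 hS]; exact Or.inr (Or.inr rfl)

/-- Distinct components of `V_L` are disjoint. -/
lemma lowComp_eq_of_mem (hS : IsLowComp G S) (hS' : IsLowComp G S') {z : V}
    (hz : z ∈ S) (hz' : z ∈ S') : S = S' := by
  obtain ⟨_, x, hx, hchar⟩ := hS
  obtain ⟨_, x', hx', hchar'⟩ := hS'
  have hxz : (restrictG G (VL G)).Reachable x z := (hchar z).mpr hz
  have hx'z : (restrictG G (VL G)).Reachable x' z := (hchar' z).mpr hz'
  ext y
  rw [← hchar y, ← hchar' y]
  exact ⟨fun h => hx'z.trans (hxz.symm.trans h), fun h => hxz.trans (hx'z.symm.trans h)⟩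

/-- An edge of `G` cannot touch two distinct components. -/
lemma comp_eq_of_touch (hS : S ∈ C2 G u v) (hS' : S' ∈ C2 G u v) {a b : V}
    (hadj : G.Adj a b) (h1 : a ∈ S ∨ b ∈ S) (h2 : a ∈ S' ∨ b ∈ S') : S = S' := by
  have key : ∀ T T' : Set V, T ∈ C2 G u v → T' ∈ C2 G u v → a ∈ T → b ∈ T' → T = T' := by
    intro T T' hT hT' haT hbT'
    have hb : b ∈ T := mem_of_adj_lowComp hT.1 haT (hT'.1.1 hbT') hadj
    exact lowComp_eq_of_mem hT.1 hT'.1 hb hbT'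
  rcases h1 with h1 | h1 <;> rcases h2 with h2 | h2
  · exact lowComp_eq_of_mem hS.1 hS'.1 h1 h2
  · exact key S S' hS hS' h1 h2
  · exact (key S' S hS' hS h2 h1).symm
  · exact lowComp_eq_of_mem hS.1 hS'.1 h1 h2

/-- The set of (ordered) cut pairs. -/
def cutPairs {W : Type*} (H : SimpleGraph W) (X : Set W) : Set (W × W) :=
  {p : W × W | H.Adj p.1 p.2 ∧ p.1 ∈ X ∧ p.2 ∉ X}

lemma cutValue_eq_ncard {W : Type*} (H : SimpleGraph W) (X : Set W) :
    cutValue H X = (cutPairs H X).ncard := rfl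

lemma ncard_swap_image {W : Type*} (A : Set (W × W)) :
    (Prod.swap '' A).ncard = A.ncard :=
  Set.ncard_image_of_injective _ Prod.swap_injective

lemma cutValue_compl {W : Type*} (H : SimpleGraph W) (X : Set W) :
    cutValue H Xᶜ = cutValue H X := by
  rw [cutValue_eq_ncard, cutValue_eq_ncard, ← ncard_swap_image (cutPairs H X)]
  congr 1
  ext ⟨a, b⟩
  simp only [cutPairs, Set.mem_image, Set.mem_setOf_eq, Prod.exists, Prod.swap_prod_mk,
    Set.mem_compl_iff, not_not, Prod.mk.injEq]
  constructor
  · rintro ⟨hadj, ha, hb⟩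
    exact ⟨b, a, ⟨hadj.symm, hb, ha⟩, rfl, rfl⟩
  · rintro ⟨x, y, ⟨hadj, hx, hy⟩, rfl, rfl⟩
    exact ⟨hadj.symm, hy, hx⟩

lemma isMinCut_compl {W : Type*} {H : SimpleGraph W} {Z : Set W} (hX : IsMinCut H Z) :
    IsMinCut H Zᶜ :=
  ⟨hX.2.1, by rw [compl_compl]; exact hX.1,
    fun Y hY hYc => by rw [cutValue_compl]; exact hX.2.2 Y hY hYc⟩

/-- Endpoints of edges of `G[S]` lie in `vertsOf G S`. -/
lemma adj_mem_vertsOf {a b : V} (h : (edgeNbhdG G S).Adj a b) :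
    a ∈ vertsOf G S ∧ b ∈ vertsOf G S := by
  obtain ⟨hadj, hS | hS⟩ := h
  · exact ⟨Or.inl hS, Or.inr ⟨a, hS, hadj.symm⟩⟩
  · exact ⟨Or.inr ⟨b, hS, hadj⟩, Or.inl hS⟩

/-- For `Z ⊆ S`, the global cut value of `Z` equals its cut value in `G[S]`. -/
lemma cutValue_restrict (hZ : Y ⊆ S) : cutValue G Y = cutValue (edgeNbhdG G S) Y := by
  unfold cutValue
  congr 1
  ext ⟨a, b⟩
  simp only [Set.mem_setOf_eq]
  constructor
  · rintro ⟨hadj, ha, hb⟩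
    exact ⟨⟨hadj, Or.inl (hZ ha)⟩, ha, hb⟩
  · rintro ⟨hadj, ha, hb⟩
    exact ⟨hadj.1, ha, hb⟩

/-- Complementing a cut of `G[S]` within its vertex set preserves the cut value. -/
lemma cutValue_edgeNbhd_compl (hY : Y ⊆ vertsOf G S) :
    cutValue (edgeNbhdG G S) (vertsOf G S \ Y) = cutValue (edgeNbhdG G S) Y := by
  rw [cutValue_eq_ncard, cutValue_eq_ncard, ← ncard_swap_image (cutPairs (edgeNbhdG G S) Y)]
  congr 1
  ext ⟨a, b⟩
  simp only [cutPairs, Set.mem_image, Set.mem_setOf_eq, Prod.exists, Prod.swap_prod_mk,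
    Prod.mk.injEq, Set.mem_diff, not_and, not_not]
  constructor
  · rintro ⟨hadj, ⟨haV, haY⟩, hb⟩
    exact ⟨b, a, ⟨hadj.symm, hb (adj_mem_vertsOf hadj).2, haY⟩, rfl, rfl⟩
  · rintro ⟨x, y, ⟨hadj, hx, hy⟩, rfl, rfl⟩
    exact ⟨hadj.symm, ⟨(adj_mem_vertsOf hadj).2, hy⟩, fun _ => hx⟩

variable [Fintype V]

/-- The cut induced on `G[S]` is at most the global cut. -/
lemma cutValue_inter_le (S : Set V) : cutValue (edgeNbhdG G S) (X ∩ vertsOf G S) ≤ cutValue G X := by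
  apply Set.ncard_le_ncard _ (Set.toFinite _)
  rintro ⟨a, b⟩ ⟨hadj, ⟨ha, _⟩, hb⟩
  exact ⟨hadj.1, ha, fun hbX => hb ⟨hbX, (adj_mem_vertsOf hadj).2⟩⟩

/-- The cut pairs touching `S` are exactly the cut pairs of the induced cut of `G[S]`. -/
lemma touch_eq (S : Set V) (X : Set V) :
    {p : V × V | G.Adj p.1 p.2 ∧ p.1 ∈ X ∧ p.2 ∉ X ∧ (p.1 ∈ S ∨ p.2 ∈ S)} =
      cutPairs (edgeNbhdG G S) (X ∩ vertsOf G S) := by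
  ext ⟨a, b⟩
  simp only [cutPairs, Set.mem_setOf_eq]
  constructor
  · rintro ⟨hadj, ha, hb, htouch⟩
    refine ⟨⟨hadj, htouch⟩, ⟨ha, ?_⟩, fun h => hb h.1⟩
    rcases htouch with h | h
    · exact Or.inl h
    · exact Or.inr ⟨b, h, hadj⟩
  · rintro ⟨hadj, ⟨ha, _⟩, hb⟩
    exact ⟨hadj.1, ha, fun hbX => hb ⟨hbX, (adj_mem_vertsOf hadj).2⟩, hadj.2⟩

lemma ncard_biUnion_eq {α β : Type*} [Finite β] (s : Finset α) (f : α → Set β)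
    (hdisj : ∀ i ∈ s, ∀ j ∈ s, i ≠ j → Disjoint (f i) (f j)) :
    (⋃ i ∈ s, f i).ncard = ∑ i ∈ s, (f i).ncard := by
  classical
  have hfin : ∀ i, (f i).Finite := fun i => Set.toFinite _
  rw [show (⋃ i ∈ s, f i) = ↑(s.biUnion fun i => (hfin i).toFinset) by
      simp [Finset.coe_biUnion, Set.Finite.coe_toFinset]]
  rw [Set.ncard_coe_finset, Finset.card_biUnion]
  · exact Finset.sum_congr rfl fun i _ => (Set.ncard_eq_toFinset_card _ (hfin i)).symm
  · intro i hi j hj hij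
    simpa [Set.Finite.disjoint_toFinset] using hdisj i hi j hj hij

/-- The defining set of `c'(S)` is nonempty. -/
lemma stSet_nonempty (hS : S ∈ C2 G u v) (huv : u ≠ v) :
    {c : ℕ | ∃ Y ⊆ vertsOf G S, Y.Nonempty ∧ (vertsOf G S \ Y).Nonempty ∧
      ((u ∈ Y ∧ v ∉ Y) ∨ (v ∈ Y ∧ u ∉ Y)) ∧ c = cutValue (edgeNbhdG G S) Y}.Nonempty := by
  refine ⟨cutValue (edgeNbhdG G S) {u}, {u}, ?_, ⟨u, rfl⟩,
    ⟨v, v_mem_vertsOf hS, fun h => huv h.symm⟩,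
    Or.inl ⟨rfl, fun h => huv h.symm⟩, rfl⟩
  intro z hz
  rw [Set.mem_singleton_iff] at hz
  subst hz
  exact u_mem_vertsOf hS

/-- The defining set of `c''(S)` is nonempty. -/
lemma spSet_nonempty (hS : S ∈ C2 G u v) (hu : u ∈ VH G) (hv : v ∈ VH G) :
    {c : ℕ | ∃ Y ⊆ vertsOf G S, Y.Nonempty ∧ (vertsOf G S \ Y).Nonempty ∧
      ((u ∈ Y ∧ v ∈ Y) ∨ (u ∉ Y ∧ v ∉ Y)) ∧ c = cutValue (edgeNbhdG G S) Y}.Nonempty :=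
  ⟨cutValue (edgeNbhdG G S) S, S, fun _ h => Or.inl h, C2_nonempty hS,
    ⟨u, u_mem_vertsOf hS, not_mem_C2_of_VH hu hS⟩,
    Or.inr ⟨not_mem_C2_of_VH hu hS, not_mem_C2_of_VH hv hS⟩, rfl⟩

variable [Fintype V]

/-- A minimum cut is at most `c''(S)` for any type-2 component `S`. -/
lemma cutValue_le_samePart (hX : IsMinCut G X) (hu : u ∈ VH G) (hv : v ∈ VH G)
    (hS : S ∈ C2 G u v) : cutValue G X ≤ samePartMinCutVal G S u v := by
  obtain ⟨Y, hYsub, hYne, hYcne, hsame, hc⟩ := Nat.sInf_mem (spSet_nonempty hS hu hv)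
  rw [samePartMinCutVal, hc]
  rcases hsame with ⟨huY, hvY⟩ | ⟨huY, hvY⟩
  · have hZS : vertsOf G S \ Y ⊆ S := by
      rintro z ⟨hzV, hzY⟩
      rw [vertsOf_C2 hS] at hzV
      rcases hzV with hz | hz
      · exact hz
      · rcases hz with rfl | rfl
        · exact absurd huY hzY
        · exact absurd hvY hzY
    calc cutValue G X ≤ cutValue G (vertsOf G S \ Y) :=
          hX.2.2 _ hYcne ⟨u, fun h => h.2 huY⟩
      _ = cutValue (edgeNbhdG G S) (vertsOf G S \ Y) := cutValue_restrict hZS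
      _ = cutValue (edgeNbhdG G S) Y := cutValue_edgeNbhd_compl hYsub
  · have hYS : Y ⊆ S := by
      intro z hz
      have hzV := hYsub hz
      rw [vertsOf_C2 hS] at hzV
      rcases hzV with h | h
      · exact h
      · rcases h with rfl | rfl
        · exact absurd hz huY
        · exact absurd hz hvY
    calc cutValue G X ≤ cutValue G Y := hX.2.2 Y hYne ⟨u, fun h => huY h⟩
      _ = cutValue (edgeNbhdG G S) Y := cutValue_restrict hYS

/-- Case where `u` and `v` lie on the same side of the cut. -/
lemma case_same_side (hX : IsMinCut G X) (hu : u ∈ VH G) (hv : v ∈ VH G) (huv : u ≠ v)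
    (huX : u ∈ X) (hvX : v ∈ X) :
    ((⋃ S ∈ C2 G u v, S) ∪ {u, v} ⊆ X) ∨
      cutValue G X = sInf ((fun S => samePartMinCutVal G S u v) '' C2 G u v) := by
  by_cases hsub : (⋃ S ∈ C2 G u v, S) ⊆ X
  · left
    refine Set.union_subset hsub ?_
    rintro x (rfl | rfl) <;> assumption
  · right
    rw [Set.not_subset] at hsub
    obtain ⟨w, hwU, hwX⟩ := hsub
    rw [Set.mem_iUnion₂] at hwU
    obtain ⟨S0, hS0, hw⟩ := hwU
    apply le_antisymm
    · refine le_csInf ⟨_, Set.mem_image_of_mem _ hS0⟩ ?_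
      rintro c ⟨S, hS, rfl⟩
      exact cutValue_le_samePart hX hu hv hS
    · have h1 : samePartMinCutVal G S0 u v ≤ cutValue G X := by
        refine le_trans (Nat.sInf_le ?_) (cutValue_inter_le S0)
        exact ⟨X ∩ vertsOf G S0, Set.inter_subset_right,
          ⟨u, huX, u_mem_vertsOf hS0⟩,
          ⟨w, Or.inl hw, fun h => hwX h.1⟩,
          Or.inl ⟨⟨huX, u_mem_vertsOf hS0⟩, ⟨hvX, v_mem_vertsOf hS0⟩⟩, rfl⟩
      exact le_trans (Nat.sInf_le (Set.mem_image_of_mem _ hS0)) h1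

/-- Decomposition of the cut value into pairs touching `S` and pairs avoiding `S`. -/
lemma cut_decomp (S : Set V) (W : Set V) :
    cutValue G W = cutValue (edgeNbhdG G S) (W ∩ vertsOf G S) +
      {p : V × V | G.Adj p.1 p.2 ∧ p.1 ∈ W ∧ p.2 ∉ W ∧ ¬(p.1 ∈ S ∨ p.2 ∈ S)}.ncard := by
  have hsplit : cutPairs G W =
      {p : V × V | G.Adj p.1 p.2 ∧ p.1 ∈ W ∧ p.2 ∉ W ∧ (p.1 ∈ S ∨ p.2 ∈ S)} ∪
      {p : V × V | G.Adj p.1 p.2 ∧ p.1 ∈ W ∧ p.2 ∉ W ∧ ¬(p.1 ∈ S ∨ p.2 ∈ S)} := by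
    ext ⟨a, b⟩
    simp only [cutPairs, Set.mem_setOf_eq, Set.mem_union]
    tauto
  have hdisj : Disjoint
      {p : V × V | G.Adj p.1 p.2 ∧ p.1 ∈ W ∧ p.2 ∉ W ∧ (p.1 ∈ S ∨ p.2 ∈ S)}
      {p : V × V | G.Adj p.1 p.2 ∧ p.1 ∈ W ∧ p.2 ∉ W ∧ ¬(p.1 ∈ S ∨ p.2 ∈ S)} := by
    rw [Set.disjoint_left]
    rintro ⟨a, b⟩ ⟨_, _, _, h1⟩ ⟨_, _, _, h2⟩
    exact h2 h1
  calc cutValue G W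
      = ({p : V × V | G.Adj p.1 p.2 ∧ p.1 ∈ W ∧ p.2 ∉ W ∧ (p.1 ∈ S ∨ p.2 ∈ S)} ∪
        {p : V × V | G.Adj p.1 p.2 ∧ p.1 ∈ W ∧ p.2 ∉ W ∧ ¬(p.1 ∈ S ∨ p.2 ∈ S)}).ncard := by
        rw [cutValue_eq_ncard, hsplit]
    _ = {p : V × V | G.Adj p.1 p.2 ∧ p.1 ∈ W ∧ p.2 ∉ W ∧ (p.1 ∈ S ∨ p.2 ∈ S)}.ncard +
        {p : V × V | G.Adj p.1 p.2 ∧ p.1 ∈ W ∧ p.2 ∉ W ∧ ¬(p.1 ∈ S ∨ p.2 ∈ S)}.ncard :=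
        Set.ncard_union_eq hdisj (Set.toFinite _) (Set.toFinite _)
    _ = _ := by rw [touch_eq S W, ← cutValue_eq_ncard]

/-- In the split case, each component contributes exactly `c'(S)` to the cut. -/
lemma count_eq_stMinCut (hX : IsMinCut G X) (hu : u ∈ VH G) (hv : v ∈ VH G) (huv : u ≠ v)
    (hS : S ∈ C2 G u v) (huX : u ∈ X) (hvX : v ∉ X) :
    cutValue (edgeNbhdG G S) (X ∩ vertsOf G S) = stMinCutVal G S u v := by
  have husv : u ∉ S := not_mem_C2_of_VH hu hS
  have hvsv : v ∉ S := not_mem_C2_of_VH hv hS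
  apply le_antisymm
  swap
  · apply Nat.sInf_le
    exact ⟨X ∩ vertsOf G S, Set.inter_subset_right,
      ⟨u, huX, u_mem_vertsOf hS⟩, ⟨v, v_mem_vertsOf hS, fun h => hvX h.1⟩,
      Or.inl ⟨⟨huX, u_mem_vertsOf hS⟩, fun h => hvX h.1⟩, rfl⟩
  by_contra hlt
  push_neg at hlt
  obtain ⟨Y0, hY0sub, hY0ne, hY0cne, hside, hc0⟩ := Nat.sInf_mem (stSet_nonempty hS huv)
  obtain ⟨Y1, hY1sub, huY1, hvY1, hval⟩ :
      ∃ Y1, Y1 ⊆ vertsOf G S ∧ u ∈ Y1 ∧ v ∉ Y1 ∧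
        cutValue (edgeNbhdG G S) Y1 = stMinCutVal G S u v := by
    rcases hside with ⟨h1, h2⟩ | ⟨h1, h2⟩
    · exact ⟨Y0, hY0sub, h1, h2, hc0.symm⟩
    · exact ⟨vertsOf G S \ Y0, Set.diff_subset, ⟨u_mem_vertsOf hS, h2⟩,
        fun h => h.2 h1, by rw [cutValue_edgeNbhd_compl hY0sub, ← hc0]; rfl⟩
  set X' := (X \ S) ∪ (Y1 ∩ S) with hX'def
  have hmemX' : ∀ z, z ∉ S → (z ∈ X' ↔ z ∈ X) := by
    intro z hz
    simp only [hX'def, Set.mem_union, Set.mem_diff, Set.mem_inter_iff]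
    tauto
  have hXV : X' ∩ vertsOf G S = Y1 := by
    ext z
    constructor
    · rintro ⟨hz1, hz2⟩
      rw [vertsOf_C2 hS] at hz2
      rcases hz2 with hzS | hz2
      · rcases hz1 with ⟨_, hns⟩ | ⟨hY, _⟩
        · exact absurd hzS hns
        · exact hY
      · rcases hz2 with rfl | rfl
        · exact huY1
        · rcases hz1 with ⟨hvx, _⟩ | ⟨hvy, _⟩
          · exact absurd hvx hvX
          · exact absurd hvy hvY1
    · intro hzY1
      have hzV := hY1sub hzY1
      refine ⟨?_, hzV⟩
      rw [vertsOf_C2 hS] at hzV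
      rcases hzV with hzS | hz2
      · exact Or.inr ⟨hzY1, hzS⟩
      · rcases hz2 with rfl | rfl
        · exact Or.inl ⟨huX, husv⟩
        · exact absurd hzY1 hvY1
  have huntouch :
      {p : V × V | G.Adj p.1 p.2 ∧ p.1 ∈ X' ∧ p.2 ∉ X' ∧ ¬(p.1 ∈ S ∨ p.2 ∈ S)} =
      {p : V × V | G.Adj p.1 p.2 ∧ p.1 ∈ X ∧ p.2 ∉ X ∧ ¬(p.1 ∈ S ∨ p.2 ∈ S)} := by
    ext ⟨a, b⟩
    simp only [Set.mem_setOf_eq]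
    constructor <;> rintro ⟨hadj, ha, hb, ht⟩
    · exact ⟨hadj, (hmemX' _ fun h => ht (Or.inl h)).mp ha,
        fun h => hb ((hmemX' _ fun h2 => ht (Or.inr h2)).mpr h), ht⟩
    · exact ⟨hadj, (hmemX' _ fun h => ht (Or.inl h)).mpr ha,
        fun h => hb ((hmemX' _ fun h2 => ht (Or.inr h2)).mp h), ht⟩
  have hlt' : cutValue G X' < cutValue G X := by
    rw [cut_decomp S X, cut_decomp S X', hXV, hval, huntouch]
    exact Nat.add_lt_add_right hlt _
  have hge : cutValue G X ≤ cutValue G X' := by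
    refine hX.2.2 X' ⟨u, Or.inl ⟨huX, husv⟩⟩ ⟨v, ?_⟩
    rintro (⟨h, _⟩ | ⟨h, _⟩)
    · exact hvX h
    · exact hvY1 h
  omega

/-- Case where `u` and `v` lie on different sides of the cut. -/
lemma case_diff_side (hX : IsMinCut G X) (hu : u ∈ VH G) (hv : v ∈ VH G) (huv : u ≠ v)
    (huX : u ∈ X) (hvX : v ∉ X) :
    {p : V × V | G.Adj p.1 p.2 ∧ p.1 ∈ X ∧ p.2 ∉ X ∧
        (p.1 ∈ ⋃ S ∈ C2 G u v, S ∨ p.2 ∈ ⋃ S ∈ C2 G u v, S)}.ncard =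
      ∑ᶠ S ∈ C2 G u v, stMinCutVal G S u v := by
  classical
  have hfin : (C2 G u v).Finite := Set.toFinite _
  set f : Set V → Set (V × V) := fun S =>
    {p : V × V | G.Adj p.1 p.2 ∧ p.1 ∈ X ∧ p.2 ∉ X ∧ (p.1 ∈ S ∨ p.2 ∈ S)} with hf
  have hUnion : {p : V × V | G.Adj p.1 p.2 ∧ p.1 ∈ X ∧ p.2 ∉ X ∧
      (p.1 ∈ ⋃ S ∈ C2 G u v, S ∨ p.2 ∈ ⋃ S ∈ C2 G u v, S)} = ⋃ S ∈ hfin.toFinset, f S := by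
    ext ⟨a, b⟩
    simp only [hf, Set.mem_setOf_eq, Set.mem_iUnion, Set.Finite.mem_toFinset,
      Set.mem_iUnion₂, exists_prop]
    constructor
    · rintro ⟨hadj, ha, hb, (⟨S, hS, h⟩ | ⟨S, hS, h⟩)⟩
      · exact ⟨S, hS, hadj, ha, hb, Or.inl h⟩
      · exact ⟨S, hS, hadj, ha, hb, Or.inr h⟩
    · rintro ⟨S, hS, hadj, ha, hb, (h | h)⟩
      · exact ⟨hadj, ha, hb, Or.inl ⟨S, hS, h⟩⟩
      · exact ⟨hadj, ha, hb, Or.inr ⟨S, hS, h⟩⟩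
  rw [hUnion, ncard_biUnion_eq]
  · rw [finsum_mem_eq_finite_toFinset_sum _ hfin]
    refine Finset.sum_congr rfl fun S hS' => ?_
    rw [hfin.mem_toFinset] at hS'
    have h1 : f S = cutPairs (edgeNbhdG G S) (X ∩ vertsOf G S) := touch_eq S X
    rw [h1, ← cutValue_eq_ncard]
    exact count_eq_stMinCut hX hu hv huv hS' huX hvX
  · intro S hS1 S' hS2 hne
    rw [hfin.mem_toFinset] at hS1 hS2
    rw [Set.disjoint_left]
    rintro ⟨a, b⟩ ⟨hadj, _, _, h1⟩ ⟨_, _, _, h2⟩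
    exact hne (comp_eq_of_touch hS1 hS2 hadj h1 h2)

end Aux

/-- Let `(X, V∖X)` be a minimum cut of `G` and `u ≠ v` in `V_H`.  Then either (i) one
part of the cut contains all vertices of `(⋃_{S ∈ C(u,v)} S) ∪ {u,v}`; or (ii) its value
equals `min_{S ∈ C(u,v)} c''(S)`; or (iii) `u` and `v` lie in different parts and the
number of cut edges with at least one endpoint in `⋃_{S ∈ C(u,v)} S` equals
`∑_{S ∈ C(u,v)} c'(S)`. -/
theorem minCut_type2 (G : SimpleGraph V) (hG : G.Connected)
    (hn : 1 ≤ Fintype.card V) (X : Set V) (hX : IsMinCut G X)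
    (u v : V) (hu : u ∈ VH G) (hv : v ∈ VH G) (huv : u ≠ v) :
    ((⋃ S ∈ C2 G u v, S) ∪ {u, v} ⊆ X ∨ (⋃ S ∈ C2 G u v, S) ∪ {u, v} ⊆ Xᶜ) ∨
      cutValue G X = sInf ((fun S => samePartMinCutVal G S u v) '' C2 G u v) ∨
      (((u ∈ X ∧ v ∉ X) ∨ (v ∈ X ∧ u ∉ X)) ∧
        {p : V × V | G.Adj p.1 p.2 ∧ p.1 ∈ X ∧ p.2 ∉ X ∧
            (p.1 ∈ ⋃ S ∈ C2 G u v, S ∨ p.2 ∈ ⋃ S ∈ C2 G u v, S)}.ncard =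
          ∑ᶠ S ∈ C2 G u v, stMinCutVal G S u v) := by
  by_cases huX : u ∈ X <;> by_cases hvX : v ∈ X
  · rcases case_same_side hX hu hv huv huX hvX with h | h
    · exact Or.inl (Or.inl h)
    · exact Or.inr (Or.inl h)
  · exact Or.inr (Or.inr ⟨Or.inl ⟨huX, hvX⟩, case_diff_side hX hu hv huv huX hvX⟩)
  · -- v ∈ X, u ∉ X : apply the split case to the complement cut
    have hvXc : v ∉ Xᶜ := fun h => h hvX
    have h := case_diff_side (isMinCut_compl hX) hu hv huv huX hvXc
    refine Or.inr (Or.inr ⟨Or.inr ⟨hvX, huX⟩, ?_⟩)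
    rw [← h, ← ncard_swap_image {p : V × V | G.Adj p.1 p.2 ∧ p.1 ∈ Xᶜ ∧ p.2 ∉ Xᶜ ∧
        (p.1 ∈ ⋃ S ∈ C2 G u v, S ∨ p.2 ∈ ⋃ S ∈ C2 G u v, S)}]
    congr 1
    ext ⟨a, b⟩
    simp only [Set.mem_setOf_eq, Set.mem_image, Prod.exists, Prod.swap_prod_mk,
      Set.mem_compl_iff, not_not, Prod.mk.injEq]
    constructor
    · rintro ⟨hadj, ha, hb, ht⟩
      exact ⟨b, a, ⟨hadj.symm, hb, ha, ht.symm⟩, rfl, rfl⟩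
    · rintro ⟨x, y, ⟨hadj, hx, hy, ht⟩, rfl, rfl⟩
      exact ⟨hadj.symm, hy, hx, ht.symm⟩
  · -- both outside X
    have huXc : u ∈ Xᶜ := huX
    have hvXc : v ∈ Xᶜ := hvX
    rcases case_same_side (isMinCut_compl hX) hu hv huv huXc hvXc with h | h
    · exact Or.inl (Or.inr h)
    · rw [cutValue_compl] at h
      exact Or.inr (Or.inl h)

end
end EnergyDiameter
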